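/- Let d ≥ 5 be an integer and let f = x^{d-1}z + y^d + x^{d-2}yw + xy^{d-1} ∈ ℂ[x,y,z,w]. For every (α, β, γ, δ) ∈ ℂ⁴ with γ ≠ 0, the solutions (x,y,z,w) ∈ ℂ⁴ of the system (∂f/∂x, ∂f/∂y, ∂f/∂z, ∂f/∂w) = (α, β, γ, δ) form a nonempty set all of whose elements are pairwise proportional. -/

import Mathlib

/-!
The gradient of `f` is homogeneous of degree `d - 1` and triangular: `∂f/∂z = x^{d-1}`,
`∂f/∂w = x^{d-2} y`, `∂f/∂y = x^{d-2} w + (terms in x, y)` and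
`∂f/∂x = (d-1) x^{d-2} z + (terms in x, y, w)`. So for `γ ≠ 0` one picks `x` with
`x^{d-1} = γ` and solves successively for `y`, `w`, `z`; the same computation shows that a
solution is determined by its `x`-coordinate. If `p`, `q` are solutions, `c = q₀ / p₀` satisfies
`c^{d-1} = 1`, so `c • p` is a solution by homogeneity, with the same `x`-coordinate as `q`.
-/

open MvPolynomial

theorem MvPolynomial.IsHomogeneous.eval_smul {σ R : Type*} [CommSemiring R]
    {φ : MvPolynomial σ R} {n : ℕ} (hφ : φ.IsHomogeneous n) (c : R) (p : σ → R) :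
    eval (c • p) φ = c ^ n * eval p φ := by
  rw [eval_eq, eval_eq, Finset.mul_sum]
  refine Finset.sum_congr rfl fun s hs => ?_
  simp only [Pi.smul_apply, smul_eq_mul, mul_pow, Finset.prod_mul_distrib,
    Finset.prod_pow_eq_pow_sum, ← hφ.degree_eq_sum_deg_support hs]
  ring

noncomputable def gradientMap {σ R : Type*} [CommSemiring R] (f : MvPolynomial σ R)
    (p : σ → R) : σ → R :=
  fun i => eval p (pderiv i f)

theorem MvPolynomial.IsHomogeneous.gradientMap_smul {σ R : Type*} [CommSemiring R]
    {φ : MvPolynomial σ R} {n : ℕ} (hφ : φ.IsHomogeneous n) (c : R) (p : σ → R) :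
    gradientMap φ (c • p) = c ^ (n - 1) • gradientMap φ p := by
  ext i
  exact (IsHomogeneous.pderiv hφ).eval_smul c p

/-- `X 0, X 1, X 2, X 3` play the roles of `x, y, z, w`. -/
noncomputable def D''' (K : Type*) [Field K] (d : ℕ) : MvPolynomial (Fin 4) K :=
  X 0 ^ (d - 1) * X 2 + X 1 ^ d + X 0 ^ (d - 2) * X 1 * X 3 + X 0 * X 1 ^ (d - 1)

section D'''

variable {K : Type*} [Field K] {d : ℕ}

theorem isHomogeneous_D''' (hd : 2 ≤ d) : (D''' K d).IsHomogeneous d := by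
  have hxz : (X 0 ^ (d - 1) * X 2 : MvPolynomial (Fin 4) K).IsHomogeneous d := by
    convert (isHomogeneous_X_pow _ _).mul (isHomogeneous_X K _) using 1; omega
  have hxyw : (X 0 ^ (d - 2) * X 1 * X 3 : MvPolynomial (Fin 4) K).IsHomogeneous d := by
    convert ((isHomogeneous_X_pow _ _).mul (isHomogeneous_X K _)).mul (isHomogeneous_X K _)
      using 1; omega
  have hxy : (X 0 * X 1 ^ (d - 1) : MvPolynomial (Fin 4) K).IsHomogeneous d := by
    convert (isHomogeneous_X K _).mul (isHomogeneous_X_pow _ _) using 1; omega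
  exact ((hxz.add (isHomogeneous_X_pow 1 d)).add hxyw).add hxy

theorem gradientMap_D''' (p : Fin 4 → K) :
    gradientMap (D''' K d) p =
      ![((d - 1 : ℕ) : K) * p 0 ^ (d - 2) * p 2 + ((d - 2 : ℕ) : K) * p 0 ^ (d - 3) * p 1 * p 3
          + p 1 ^ (d - 1),
        (d : K) * p 1 ^ (d - 1) + p 0 ^ (d - 2) * p 3 + ((d - 1 : ℕ) : K) * p 0 * p 1 ^ (d - 2),
        p 0 ^ (d - 1),
        p 0 ^ (d - 2) * p 1] := by
  ext i
  fin_cases i <;> simp [gradientMap, D''', pderiv_X, Nat.sub_sub] <;> ring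

theorem eq_of_gradientMap_D'''_eq [CharZero K] (hd : 2 ≤ d) {p q : Fin 4 → K}
    (h : gradientMap (D''' K d) p = gradientMap (D''' K d) q) (h0 : p 0 = q 0)
    (hp0 : p 0 ≠ 0) : p = q := by
  simp only [gradientMap_D'''] at h
  have hfx := congrFun h 0
  have hfy := congrFun h 1
  have hfw := congrFun h 3
  simp only [Matrix.cons_val] at hfx hfy hfw
  rw [h0] at hfx hfy hfw hp0
  have hy : p 1 = q 1 := mul_left_cancel₀ (pow_ne_zero _ hp0) hfw
  have hw : p 3 = q 3 := by
    rw [hy] at hfy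
    exact mul_left_cancel₀ (pow_ne_zero (d - 2) hp0) (by linear_combination hfy)
  have hz : p 2 = q 2 := by
    rw [hy, hw] at hfx
    have hd1 : ((d - 1 : ℕ) : K) ≠ 0 := Nat.cast_ne_zero.2 (by omega)
    exact mul_left_cancel₀ (mul_ne_zero hd1 (pow_ne_zero (d - 2) hp0)) (by linear_combination hfx)
  ext i
  fin_cases i <;> assumption

theorem exists_gradientMap_D'''_eq [IsAlgClosed K] [CharZero K] (hd : 2 ≤ d)
    (v : Fin 4 → K) (hv : v 2 ≠ 0) : ∃ p, gradientMap (D''' K d) p = v := by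
  obtain ⟨x, hx⟩ := IsAlgClosed.exists_pow_nat_eq (v 2) (n := d - 1) (by omega)
  have hx0 : x ≠ 0 := by
    rintro rfl
    exact hv (by rw [← hx, zero_pow (by omega)])
  have hd1 : ((d - 1 : ℕ) : K) ≠ 0 := Nat.cast_ne_zero.2 (by omega)
  set y := v 3 / x ^ (d - 2) with hy
  set w := (v 1 - d * y ^ (d - 1) - ((d - 1 : ℕ) : K) * x * y ^ (d - 2)) / x ^ (d - 2) with hw
  set z := (v 0 - ((d - 2 : ℕ) : K) * x ^ (d - 3) * y * w - y ^ (d - 1)) /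
    (((d - 1 : ℕ) : K) * x ^ (d - 2)) with hz
  refine ⟨![x, y, z, w], ?_⟩
  rw [gradientMap_D''']
  ext i
  fin_cases i <;> simp only [Fin.zero_eta, Fin.mk_one, Fin.reduceFinMk, Matrix.cons_val]
  · rw [hz]; field_simp; ring
  · rw [hw]; field_simp; ring
  · exact hx
  · rw [hy]; field_simp

theorem exists_smul_eq_of_gradientMap_D'''_eq [CharZero K] (hd : 2 ≤ d) {p q : Fin 4 → K}
    (h : gradientMap (D''' K d) p = gradientMap (D''' K d) q)
    (hp : gradientMap (D''' K d) p 2 ≠ 0) : ∃ c : K, c ≠ 0 ∧ q = c • p := by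
  have hfz : ∀ r, gradientMap (D''' K d) r 2 = r 0 ^ (d - 1) := fun r => by
    simp [gradientMap_D''']
  have hp0 : p 0 ≠ 0 := fun h0 => hp (by rw [hfz, h0, zero_pow (by omega)])
  have hq0 : q 0 ≠ 0 := fun h0 => hp (by rw [h, hfz, h0, zero_pow (by omega)])
  set c := q 0 / p 0
  have hc : c ^ (d - 1) = 1 := by
    rw [div_pow, ← hfz, ← hfz, h, div_self (by rwa [← h])]
  have hcp : (c • p) 0 = q 0 := div_mul_cancel₀ _ hp0
  refine ⟨c, div_ne_zero hq0 hp0, (eq_of_gradientMap_D'''_eq hd ?_ hcp (hcp ▸ hq0)).symm⟩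
  rw [(isHomogeneous_D''' hd).gradientMap_smul, hc, one_smul, h]

end D'''

/-- The surface `D'''_d : x^{d-1}z + y^d + x^{d-2}yw + xy^{d-1} = 0` is homaloidal. -/
theorem stmt3 (d : ℕ) (hd : 5 ≤ d)
    (f : MvPolynomial (Fin 4) ℂ)
    (hf : f = X 0 ^ (d - 1) * X 2 + X 1 ^ d + X 0 ^ (d - 2) * X 1 * X 3 +
        X 0 * X 1 ^ (d - 1))
    (α β γ δ : ℂ) (hγ : γ ≠ 0)
    (Sol : Set (Fin 4 → ℂ))
    (hSol : Sol = {p | eval p (pderiv 0 f) = α ∧ eval p (pderiv 1 f) = β ∧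
        eval p (pderiv 2 f) = γ ∧ eval p (pderiv 3 f) = δ}) :
    Sol.Nonempty ∧ ∀ p ∈ Sol, ∀ q ∈ Sol, ∃ c : ℂ, c ≠ 0 ∧ q = c • p := by
  have hd2 : 2 ≤ d := by omega
  have hSol' : Sol = gradientMap (D''' ℂ d) ⁻¹' {![α, β, γ, δ]} := by
    subst hSol hf
    ext p
    simp [gradientMap, D''', funext_iff, Fin.forall_fin_succ]
  rw [hSol']
  refine ⟨exists_gradientMap_D'''_eq hd2 _ hγ, fun p hp q hq => ?_⟩
  rw [Set.mem_preimage, Set.mem_singleton_iff] at hp hq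
  exact exists_smul_eq_of_gradientMap_D'''_eq hd2 (hp.trans hq.symm) (by rw [hp]; exact hγ)
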